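/- For every rooted plane tree T, the ternary pit-climbing code TPC(T) never contains two consecutive occurrences of the symbol ↓, and TPC(T) does not begin with the symbol ↓. -/

import Mathlib

/-- A rooted plane tree: a root node together with a finite ordered list of
subtrees, the subtrees rooted at the children of the root. -/
inductive PTree : Type
  | node : List PTree → PTree

namespace PTree

/-- The subtrees rooted at the children of the root. -/
def children : PTree → List PTree
  | node ts => ts

mutual
/-- Number of nodes of a rooted plane tree. -/
def numNodes : PTree → ℕ
  | node ts => 1 + numNodesList ts
def numNodesList : List PTree → ℕ
  | [] => 0
  | t :: ts => numNodes t + numNodesList ts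
end

mutual
/-- Number of leaves (nodes with no children); a single-node tree has one leaf. -/
def numLeaves : PTree → ℕ
  | node [] => 1
  | node (t :: ts) => numLeaves t + numLeavesList ts
def numLeavesList : List PTree → ℕ
  | [] => 0
  | t :: ts => numLeaves t + numLeavesList ts
end

/-- Symbols of the ternary pit-climbing code: ↓, ↑, ⇑. -/
inductive PCSym : Type
  | down   -- ↓ : fall to the leftmost unexplored leaf
  | up     -- ↑ : climb to a never-before-visited node
  | upSeen -- ⇑ : climb to an already-visited node
deriving DecidableEq

mutual
/-- Ternary pit-climbing code TPC: empty for a single node; `TPC t ++ [↑]` for a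
single child subtree `t`; `TPC t₁ ++ [↑,↓] ++ TPC t₂ ++ [⇑,↓] ++ ⋯ ++ [⇑,↓] ++ TPC tₖ ++ [⇑]`
for children subtrees `t₁, …, tₖ`, `k ≥ 2`. -/
def TPC : PTree → List PCSym
  | node [] => []
  | node [t] => TPC t ++ [.up]
  | node (t₁ :: t₂ :: ts) => TPC t₁ ++ [.up, .down] ++ TPCRest (t₂ :: ts)
/-- TPC contribution of the second-onwards children subtrees. -/
def TPCRest : List PTree → List PCSym
  | [] => []
  | [t] => TPC t ++ [.upSeen]
  | t :: ts => TPC t ++ [.upSeen, .down] ++ TPCRest ts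
end

/-- Binary encoding of the pit-climbing symbols: ↓ ↦ 0, ⇑ ↦ 00, ↑ ↦ 1. -/
def pcBits : PCSym → List Bool
  | .down => [false]
  | .upSeen => [false, false]
  | .up => [true]

/-- Binary pit-climbing code PC. -/
def PC (T : PTree) : List Bool := (TPC T).flatMap pcBits

lemma numNodesList_append (a b : List PTree) :
    numNodesList (a ++ b) = numNodesList a + numNodesList b := by
  induction a with
  | nil => simp [numNodesList]
  | cons t ts ih => simp [numNodesList, ih]; ring

lemma numNodesList_children_flatten (l : List PTree) :
    numNodesList ((l.map children).flatten) + l.length = numNodesList l := by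
  induction l with
  | nil => simp [numNodesList]
  | cons t ts ih =>
      cases t with
      | node cs =>
        simp only [List.map_cons, List.flatten_cons, numNodesList_append,
          List.length_cons, numNodesList, children, numNodes]
        omega

/-- Breadth-first list of the sibling groups of a tree, starting from the list
`gs` of sibling groups at the current level: the groups of the current level
followed by the groups of children on the levels below, level by level and
left to right within each level. -/
def bfsGroups (gs : List (List PTree)) : List (List PTree) :=
  if h : gs.flatten.isEmpty then []
  else gs ++ bfsGroups (gs.flatten.map children)
termination_by numNodesList gs.flatten
decreasing_by
  have h1 := numNodesList_children_flatten gs.flatten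
  have h2 : gs.flatten.length ≠ 0 := by
    intro hh
    rw [List.length_eq_zero_iff] at hh
    exact h (List.isEmpty_iff.mpr hh)
  omega

/-- Symbols of the ternary tunnel-digging code: ←, →, ⇒. -/
inductive TDSym : Type
  | leaf   -- ← : a leaf node
  | inner  -- → : a node with at least one child
  | tunnel -- ⇒ : transition between consecutive non-sibling nodes
deriving DecidableEq

/-- The symbols written for one sibling group: ← for each leaf, → for each
node with at least one child. -/
def groupSyms (g : List PTree) : List TDSym :=
  g.map (fun t => if t.children.isEmpty then .leaf else .inner)

/-- Ternary tunnel-digging code TTD: the non-root nodes in breadth-first order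
(by increasing depth, left to right within each depth), ← for each leaf and →
for each internal node, with ⇒ inserted between every two consecutive
non-sibling nodes. -/
def TTD (T : PTree) : List TDSym :=
  List.intercalate [TDSym.tunnel]
    (((bfsGroups [T.children]).filter (fun g => ¬ g.isEmpty)).map groupSyms)

/-- Binary encoding of the tunnel-digging symbols: ⇒ ↦ 0, → ↦ 00, ← ↦ 1. -/
def tdBits : TDSym → List Bool
  | .tunnel => [false]
  | .inner => [false, false]
  | .leaf => [true]

/-- Binary tunnel-digging code TD. -/
def TD (T : PTree) : List Bool := (TTD T).flatMap tdBits

/-- TreeExplorer code TE: `0·PC(T)` if `l(T) < n(T)/2`, and `1·TD(T)` otherwise. -/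
def TE (T : PTree) : List Bool :=
  if 2 * numLeaves T < numNodes T then false :: PC T else true :: TD T

section DownSeparated

open List

/-- Prefixing a `↓` folds "does not begin with `↓`" into the chain condition. -/
def DownSeparated (l : List PCSym) : Prop :=
  (PCSym.down :: l).IsChain fun a b => a = .down → b ≠ .down

variable {l m : List PCSym} {s : PCSym}

theorem DownSeparated.nil : DownSeparated [] := isChain_singleton _

theorem DownSeparated.append_singleton (hl : DownSeparated l) (hs : s ≠ .down) :
    DownSeparated (l ++ [s]) := by
  rw [DownSeparated, ← cons_append]
  exact hl.append (isChain_singleton s) fun x _ y hy => by simp_all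

theorem DownSeparated.append_cons_down (hl : DownSeparated l) (hs : s ≠ .down)
    (hm : DownSeparated m) : DownSeparated (l ++ s :: .down :: m) :=
  isChain_cons_append_cons_cons.2 ⟨hl.append_singleton hs, fun h => absurd h hs, hm⟩

theorem DownSeparated.not_infix_down_down (hl : DownSeparated l) :
    ¬ [PCSym.down, PCSym.down] <:+: l := fun h => by
  simpa using (hl.infix (h.trans (suffix_cons _ _).isInfix)).rel_head?

theorem DownSeparated.head?_ne_down (hl : DownSeparated l) : l.head? ≠ some .down :=
  fun h => (isChain_cons.1 hl).1 _ h rfl rfl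

end DownSeparated

mutual

theorem downSeparated_TPC : ∀ t : PTree, DownSeparated (TPC t)
  | node [] => DownSeparated.nil
  | node [t] => (downSeparated_TPC t).append_singleton PCSym.noConfusion
  | node (t₁ :: t₂ :: ts) => by
    simpa [TPC] using
      (downSeparated_TPC t₁).append_cons_down PCSym.noConfusion (downSeparated_TPCRest (t₂ :: ts))

theorem downSeparated_TPCRest : ∀ ts : List PTree, DownSeparated (TPCRest ts)
  | [] => DownSeparated.nil
  | [t] => (downSeparated_TPC t).append_singleton PCSym.noConfusion
  | t :: t' :: ts => by
    simpa [TPCRest] using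
      (downSeparated_TPC t).append_cons_down PCSym.noConfusion (downSeparated_TPCRest (t' :: ts))

end

end PTree

open PTree in
/-- For every rooted plane tree `T`, `TPC(T)` never contains two consecutive
occurrences of the symbol ↓, and `TPC(T)` does not begin with ↓. -/
theorem tpc_no_consecutive_downs (T : PTree) :
    ¬ ([PCSym.down, PCSym.down] <:+: TPC T) ∧
    (TPC T).head? ≠ some PCSym.down :=
  ⟨(downSeparated_TPC T).not_infix_down_down, (downSeparated_TPC T).head?_ne_down⟩
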